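/- arXiv:1108.1721 — 2 statements merged into one kernel-verified Lean document; each statement's English description precedes it below -/
import Mathlib

section
/- If a Hausdorff locally convex space E possesses the approximation property, then every nuclear operator on E possesses a well-defined trace: any two nuclear representations of the same operator yield the same value ∑_{i=1}^∞ λ_i ⟨x'_i, x_i⟩. -/
/-
Setting: `E` is a Hausdorff locally convex topological vector space over `𝕜 = ℝ` or `ℂ`
(`RCLike 𝕜`), with `E' = E →L[𝕜] 𝕜` its (strong) dual.
-/

open Filter Topology Bornology

section Prelude

variable (𝕜 : Type) [RCLike 𝕜]

/-- A continuous linear operator on `E` is of finite rank if its range is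
finite-dimensional. -/
def IsFiniteRank {E : Type} [AddCommGroup E] [Module 𝕜 E] [TopologicalSpace E]
    (A : E →L[𝕜] E) : Prop :=
  FiniteDimensional 𝕜 (LinearMap.range (A : E →ₗ[𝕜] E))

/-- The ordinary trace `sp` of a (finite-rank) operator: the trace of the endomorphism
that it induces on its image. -/
noncomputable def sp {E : Type} [AddCommGroup E] [Module 𝕜 E] [TopologicalSpace E]
    (A : E →L[𝕜] E) : 𝕜 :=
  LinearMap.trace 𝕜 (LinearMap.range (A : E →ₗ[𝕜] E))
    ((A : E →ₗ[𝕜] E).restrict (fun x _ => LinearMap.mem_range_self _ x))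

/-- The bounded approximation property: there is a net of finite-rank operators that
converges to the identity operator in the weak operator topology and is bounded in
that topology. -/
def HasBAP (E : Type) [AddCommGroup E] [Module 𝕜 E] [TopologicalSpace E] : Prop :=
  ∃ (ι : Type) (lfil : Filter ι) (T : ι → E →L[𝕜] E), lfil.NeBot ∧
    (∀ ν, IsFiniteRank 𝕜 (T ν)) ∧
    (∀ (x : E) (f : E →L[𝕜] 𝕜), Tendsto (fun ν => f (T ν x)) lfil (𝓝 (f x))) ∧
    (∀ (x : E) (f : E →L[𝕜] 𝕜), ∃ C : ℝ, ∀ ν, ‖f (T ν x)‖ ≤ C)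

/-- The approximation property: the finite-rank operators are dense in `L(E)` for the
topology of uniform convergence on precompact (totally bounded) subsets of `E`. -/
def HasAP (E : Type) [AddCommGroup E] [Module 𝕜 E] [UniformSpace E] : Prop :=
  ∀ (A : E →L[𝕜] E) (S : Set E), TotallyBounded S → ∀ U ∈ 𝓝 (0 : E),
    ∃ F : E →L[𝕜] E, IsFiniteRank 𝕜 F ∧ ∀ x ∈ S, A x - F x ∈ U

/-- The weak approximation property: the finite-rank operators are dense in `L(E)` for
the topology of uniform convergence on absolutely convex compact subsets of `E`. -/
def HasWeakAP (E : Type) [AddCommGroup E] [Module 𝕜 E] [Module ℝ E]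
    [TopologicalSpace E] : Prop :=
  ∀ (A : E →L[𝕜] E) (K : Set E), IsCompact K → Balanced 𝕜 K → Convex ℝ K →
    ∀ U ∈ 𝓝 (0 : E), ∃ F : E →L[𝕜] E, IsFiniteRank 𝕜 F ∧ ∀ x ∈ K, A x - F x ∈ U

/-- A linear operator is weakly continuous iff the composition with every continuous
linear functional is again a continuous linear functional. -/
def IsWeaklyContinuous {E : Type} [AddCommGroup E] [Module 𝕜 E] [TopologicalSpace E]
    (A : E →ₗ[𝕜] E) : Prop :=
  ∀ f : E →L[𝕜] 𝕜, Continuous fun v => f (A v)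

/-- `B` is an absolutely convex bounded set such that the normed space `E_B`
(the span of `B` with the gauge of `B` as norm) is complete, i.e. a Banach disk.
(Completeness of the normed space `E_B` is expressed as sequential completeness for
the gauge of `B`, which is equivalent since `E_B` is metrizable.) -/
def IsBanachDisk {V : Type} [AddCommGroup V] [Module 𝕜 V] [Module ℝ V]
    [TopologicalSpace V] (B : Set V) : Prop :=
  Balanced 𝕜 B ∧ Convex ℝ B ∧ IsVonNBounded 𝕜 B ∧
    ∀ u : ℕ → V, (∀ n, u n ∈ Submodule.span 𝕜 B) →
      (∀ ε : ℝ, 0 < ε → ∃ N : ℕ, ∀ m ≥ N, ∀ n ≥ N, gauge B (u m - u n) < ε) →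
      ∃ v ∈ Submodule.span 𝕜 B, ∀ ε : ℝ, 0 < ε → ∃ N : ℕ, ∀ n ≥ N, gauge B (v - u n) < ε

/-- The data of a Fredholm kernel: a summable sequence of scalars, a sequence in a
Banach disk `B ⊆ E` and a sequence in a Banach disk `B' ⊆ E'`. -/
def FredholmKernelSeqs {E : Type} [AddCommGroup E] [Module 𝕜 E] [Module ℝ E]
    [TopologicalSpace E] [IsTopologicalAddGroup E]
    (l : ℕ → 𝕜) (x : ℕ → E) (x' : ℕ → E →L[𝕜] 𝕜) : Prop :=
  (Summable fun i => ‖l i‖) ∧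
  (∃ B : Set E, IsBanachDisk 𝕜 B ∧ ∀ i, x i ∈ B) ∧
  (∃ B' : Set (E →L[𝕜] 𝕜), IsBanachDisk 𝕜 B' ∧ ∀ i, x' i ∈ B')

/-- `A` is represented as the Fredholm operator `v ↦ ∑_{i=1}^∞ λ_i ⟨x'_i, v⟩ x_i`,
where `∑ |λ_i| < ∞`, `{x_i} ⊆ B ⊆ E` and `{x'_i} ⊆ B' ⊆ E'` with `B`, `B'` absolutely
convex bounded sets such that `E_B` and `E'_{B'}` are complete. -/
def FredholmRep {E : Type} [AddCommGroup E] [Module 𝕜 E] [Module ℝ E]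
    [TopologicalSpace E] [IsTopologicalAddGroup E]
    (A : E → E) (l : ℕ → 𝕜) (x : ℕ → E) (x' : ℕ → E →L[𝕜] 𝕜) : Prop :=
  FredholmKernelSeqs 𝕜 l x x' ∧
  ∀ v : E, Tendsto (fun n => ∑ i ∈ Finset.range n, (l i * x' i v) • x i) atTop (𝓝 (A v))

/-- `A` is represented as the nuclear operator `v ↦ ∑_{i=1}^∞ λ_i ⟨x'_i, v⟩ x_i`,
where `∑ |λ_i| < ∞`, `{x_i}` lies in an absolutely convex bounded complete set `B ⊆ E`
and `{x'_i}` is equicontinuous, i.e. lies in the polar of a neighborhood of zero. -/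
def NuclearRep {E : Type} [AddCommGroup E] [Module 𝕜 E] [Module ℝ E]
    [UniformSpace E] [IsUniformAddGroup E]
    (A : E → E) (l : ℕ → 𝕜) (x : ℕ → E) (x' : ℕ → E →L[𝕜] 𝕜) : Prop :=
  (Summable fun i => ‖l i‖) ∧
  (∃ B : Set E, Balanced 𝕜 B ∧ Convex ℝ B ∧ IsVonNBounded 𝕜 B ∧ IsComplete B ∧
    ∀ i, x i ∈ B) ∧
  (∃ U ∈ 𝓝 (0 : E), ∀ i, ∀ v ∈ U, ‖(x' i) v‖ ≤ 1) ∧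
  ∀ v : E, Tendsto (fun n => ∑ i ∈ Finset.range n, (l i * x' i v) • x i) atTop (𝓝 (A v))

end Prelude

variable {𝕜 : Type} [RCLike 𝕜] {E : Type} [AddCommGroup E] [Module 𝕜 E]
  [UniformSpace E] [IsUniformAddGroup E] [ContinuousSMul 𝕜 E]
  [Module ℝ E] [IsScalarTower ℝ 𝕜 E] [LocallyConvexSpace ℝ E] [T2Space E]

/-!
A nuclear representation `v ↦ ∑ λᵢ ⟨x'ᵢ, v⟩ xᵢ` of `A` can be compressed by any finite-rank
operator `F = ∑ₘ ⟨gₘ, ·⟩ wₘ`: the compressed trace `∑ᵢ λᵢ ⟨x'ᵢ, F xᵢ⟩` equals `∑ₘ ⟨gₘ, A wₘ⟩`,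
which depends on `A` and `F` only. On the other hand, since `∑ |λᵢ| < ∞` we may rescale
`xᵢ` by factors `βᵢ → 0` with `∑ |λᵢ| / βᵢ` still small; the points `βᵢ xᵢ` then form a
precompact set, and any `F` close to the identity on it (as the approximation property
provides) changes the trace only slightly. Comparing two representations through a common
such `F` shows that their traces agree.
-/

theorem Summable.exists_tendsto_zero_summable_div {a : ℕ → ℝ} (ha : Summable a)
    (ha0 : ∀ k, 0 ≤ a k) :
    ∃ β : ℕ → ℝ, (∀ k, 0 < β k) ∧ Tendsto β atTop (𝓝 0) ∧ Summable fun k => a k / β k := by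
  set t : ℕ → ℝ := fun k => ∑' j, a (j + k)
  set r : ℕ → ℝ := fun k => √(t k)
  have ht_succ (k : ℕ) : t k = a k + t (k + 1) := by
    simp only [t, ((summable_nat_add_iff k).2 ha).tsum_eq_zero_add, zero_add, add_right_comm _ 1 k,
      add_assoc]
  have hr_sq (k : ℕ) : r k ^ 2 = t k := Real.sq_sqrt (tsum_nonneg fun j => ha0 _)
  have hr_anti (k : ℕ) : r (k + 1) ≤ r k := Real.sqrt_le_sqrt (by linarith [ht_succ k, ha0 k])
  have hr : Tendsto r atTop (𝓝 0) := by simpa using (tendsto_sum_nat_add a).sqrt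
  have hr_telescope : Summable fun k => r k - r (k + 1) :=
    summable_of_sum_range_le (fun k => sub_nonneg.2 (hr_anti k)) fun n => by
      rw [Finset.sum_range_sub']; linarith [Real.sqrt_nonneg (t n)]
  -- `a k = r k ^ 2 - r (k + 1) ^ 2`, so dividing by `r k + r (k + 1)` telescopes; the geometric
  -- term only keeps `β` positive.
  refine ⟨fun k => r k + r (k + 1) + (1 / 2) ^ k, fun k => by positivity, ?_,
    hr_telescope.of_nonneg_of_le (fun k => div_nonneg (ha0 k) (by positivity)) fun k => ?_⟩
  · simpa using (hr.add (hr.comp (tendsto_add_atTop_nat 1))).add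
      (tendsto_pow_atTop_nhds_zero_of_lt_one (by norm_num) (by norm_num : (1 / 2 : ℝ) < 1))
  · rw [div_le_iff₀ (by positivity)]
    nlinarith [hr_sq k, hr_sq (k + 1), ht_succ k, hr_anti k, Real.sqrt_nonneg (t (k + 1)),
      mul_nonneg (sub_nonneg.2 (hr_anti k)) (pow_nonneg (by norm_num : (0 : ℝ) ≤ 1 / 2) k)]

theorem Summable.exists_tendsto_zero_tsum_div_le {a : ℕ → ℝ} (ha : Summable a)
    (ha0 : ∀ k, 0 ≤ a k) {ε : ℝ} (hε : 0 < ε) :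
    ∃ β : ℕ → ℝ, (∀ k, 0 < β k) ∧ Tendsto β atTop (𝓝 0) ∧
      Summable (fun k => a k / β k) ∧ ∑' k, a k / β k ≤ ε := by
  obtain ⟨β, hβ0, hβ, hs⟩ := ha.exists_tendsto_zero_summable_div ha0
  set D := ∑' k, a k / β k
  have hD : 0 ≤ D := tsum_nonneg fun k => div_nonneg (ha0 k) (hβ0 k).le
  set c := (D + 1) / ε
  have hc : 0 < c := by positivity
  have hdiv (k : ℕ) : a k / (c * β k) = a k / β k / c := by rw [mul_comm, div_div]
  refine ⟨fun k => c * β k, fun k => mul_pos hc (hβ0 k), by simpa using hβ.const_mul c, ?_, ?_⟩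
  · simpa only [hdiv] using hs.div_const c
  · rw [tsum_congr hdiv, tsum_div_const, div_le_iff₀ hc, mul_div_cancel₀ _ hε.ne']
    linarith

section Boundedness

variable {𝕜 E F : Type*} [NontriviallyNormedField 𝕜] [AddCommGroup E] [Module 𝕜 E]
  [TopologicalSpace E] [SeminormedAddCommGroup F] [NormedSpace 𝕜 F]

theorem exists_norm_apply_le_of_isVonNBounded {ι : Type*} {f : ι → E →L[𝕜] F} {U : Set E}
    (hU : U ∈ 𝓝 0) (hfU : ∀ i, ∀ v ∈ U, ‖f i v‖ ≤ 1) {s : Set E} (hs : IsVonNBounded 𝕜 s) :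
    ∃ C, 0 ≤ C ∧ ∀ i, ∀ v ∈ s, ‖f i v‖ ≤ C := by
  obtain ⟨r, hr⟩ := absorbs_iff_norm.1 (hs hU)
  obtain ⟨c, hc⟩ := NormedField.exists_lt_norm 𝕜 r
  refine ⟨‖c‖, norm_nonneg c, fun i v hv => ?_⟩
  obtain ⟨u, hu, rfl⟩ := Set.mem_smul_set.1 (hr c hc.le hv)
  rw [map_smul, norm_smul]
  exact mul_le_of_le_one_right (norm_nonneg c) (hfU i u hu)

end Boundedness

theorem Summable.mul_of_norm_le {R : Type*} [NormedRing R] [CompleteSpace R] {l a : ℕ → R}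
    (hl : Summable fun k => ‖l k‖) {C : ℝ} (ha : ∀ k, ‖a k‖ ≤ C) : Summable fun k => l k * a k :=
  .of_norm_bounded (hl.mul_right C) fun k =>
    (norm_mul_le _ _).trans (mul_le_mul_of_nonneg_left (ha k) (norm_nonneg _))

section FiniteRank

variable {𝕜 : Type} [RCLike 𝕜] {E : Type} [AddCommGroup E] [Module 𝕜 E] [TopologicalSpace E]
  [IsTopologicalAddGroup E] [ContinuousSMul 𝕜 E] [T2Space E]

theorem IsFiniteRank.exists_eq_sum_smul {F : E →L[𝕜] E} (hF : IsFiniteRank 𝕜 F) :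
    ∃ (n : ℕ) (g : Fin n → E →L[𝕜] 𝕜) (w : Fin n → E), ∀ v, F v = ∑ m, g m v • w m := by
  set R := LinearMap.range (F : E →ₗ[𝕜] E)
  have : FiniteDimensional 𝕜 R := hF
  let b := Module.finBasis 𝕜 R
  let Fc : E →L[𝕜] R := F.codRestrict R fun v => LinearMap.mem_range_self _ v
  refine ⟨Module.finrank 𝕜 R, fun m => (LinearMap.toContinuousLinearMap (b.coord m)).comp Fc,
    fun m => b m, fun v => ?_⟩
  change ((Fc v : R) : E) = _
  rw [← b.sum_repr (Fc v)]
  push_cast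
  rfl

end FiniteRank

namespace NuclearRep

variable {𝕜 : Type} [RCLike 𝕜] {E : Type} [AddCommGroup E] [Module 𝕜 E] [Module ℝ E]
  [UniformSpace E] [IsUniformAddGroup E]
  {A : E → E} {l : ℕ → 𝕜} {x : ℕ → E} {x' : ℕ → E →L[𝕜] 𝕜}

theorem summable_mul_apply (h : NuclearRep 𝕜 A l x x') {s : Set E} (hs : IsVonNBounded 𝕜 s)
    {z : ℕ → E} (hz : ∀ k, z k ∈ s) : Summable fun k => l k * x' k (z k) := by
  obtain ⟨hl, -, ⟨U, hU, hx'U⟩, -⟩ := h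
  obtain ⟨C, -, hC⟩ := exists_norm_apply_le_of_isVonNBounded hU hx'U hs
  exact hl.mul_of_norm_le fun k => hC k _ (hz k)

theorem hasSum_mul_apply_mul_apply [ContinuousSMul 𝕜 E] (h : NuclearRep 𝕜 A l x x') (g : E →L[𝕜] 𝕜) (w : E) :
    HasSum (fun k => l k * (x' k w * g (x k))) (g (A w)) := by
  obtain ⟨hl, ⟨B, -, -, hB, -, hxB⟩, ⟨U, hU, hx'U⟩, hA⟩ := h
  obtain ⟨C₁, hC₁, h₁⟩ :=
    exists_norm_apply_le_of_isVonNBounded hU hx'U (isVonNBounded_singleton (𝕜 := 𝕜) w)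
  obtain ⟨C₂, h₂⟩ := isBounded_iff_forall_norm_le.1 ((NormedSpace.isVonNBounded_iff 𝕜).1 (hB.image g))
  have hs : Summable fun k => l k * (x' k w * g (x k)) :=
    hl.mul_of_norm_le (C := C₁ * C₂) fun k => by
      rw [norm_mul]
      exact mul_le_mul (h₁ k w rfl) (h₂ _ ⟨x k, hxB k, rfl⟩) (norm_nonneg _) hC₁
  rw [hs.hasSum_iff_tendsto_nat]
  simpa [Function.comp_def, map_sum, map_smul, mul_assoc] using (g.continuous.tendsto (A w)).comp (hA w)

theorem hasSum_mul_apply_sum_smul [ContinuousSMul 𝕜 E] (h : NuclearRep 𝕜 A l x x') {n : ℕ} (g : Fin n → E →L[𝕜] 𝕜)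
    (w : Fin n → E) :
    HasSum (fun k => l k * x' k (∑ m, g m (x k) • w m)) (∑ m, g m (A (w m))) :=
  (hasSum_sum fun m _ => h.hasSum_mul_apply_mul_apply (g m) (w m)).congr_fun fun k => by
    simp [map_sum, map_smul, Finset.mul_sum, mul_comm]

theorem tsum_mul_apply_comp_eq [ContinuousSMul 𝕜 E] [T2Space E] {μ : ℕ → 𝕜} {y : ℕ → E}
    {y' : ℕ → E →L[𝕜] 𝕜} (hx : NuclearRep 𝕜 A l x x') (hy : NuclearRep 𝕜 A μ y y')
    {F : E →L[𝕜] E} (hF : IsFiniteRank 𝕜 F) :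
    ∑' k, l k * x' k (F (x k)) = ∑' k, μ k * y' k (F (y k)) := by
  obtain ⟨n, g, w, hgw⟩ := hF.exists_eq_sum_smul
  simp only [hgw, (hx.hasSum_mul_apply_sum_smul g w).tsum_eq,
    (hy.hasSum_mul_apply_sum_smul g w).tsum_eq]

theorem exists_forall_dist_tsum_mul_apply_comp_le (h : NuclearRep 𝕜 A l x x') {ε : ℝ}
    (hε : 0 < ε) :
    ∃ S : Set E, TotallyBounded S ∧ ∃ W ∈ 𝓝 (0 : E), ∀ F : E →L[𝕜] E, (∀ v ∈ S, v - F v ∈ W) →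
      dist (∑' k, l k * x' k (x k)) (∑' k, l k * x' k (F (x k))) ≤ ε := by
  obtain ⟨hl, ⟨B, -, -, hB, -, hxB⟩, ⟨U, hU, hx'U⟩, -⟩ := id h
  obtain ⟨β, hβ0, hβ, hβs, hβε⟩ :=
    hl.exists_tendsto_zero_tsum_div_le (fun k => norm_nonneg _) hε
  have hβx : Tendsto (fun k => (β k : 𝕜) • x k) atTop (𝓝 0) :=
    hB.smul_tendsto_zero (.of_forall hxB) (by simpa [Function.comp_def] using ((RCLike.continuous_ofReal (K := 𝕜)).tendsto 0).comp hβ)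
  refine ⟨_, hβx.isCompact_insert_range.totallyBounded, U, hU, fun F hF => ?_⟩
  have hterm (k : ℕ) : ‖l k * x' k (x k - F (x k))‖ ≤ ‖l k‖ / β k := by
    have hmem := hF _ (Set.mem_insert_of_mem _ ⟨k, rfl⟩)
    rw [map_smul, ← smul_sub] at hmem
    have hle := hx'U k _ hmem
    rw [map_smul, norm_smul, RCLike.norm_ofReal, abs_of_pos (hβ0 k)] at hle
    rw [norm_mul, le_div_iff₀ (hβ0 k)]
    nlinarith [norm_nonneg (l k)]
  rw [dist_eq_norm, ← (h.summable_mul_apply hB hxB).tsum_sub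
    (h.summable_mul_apply (hB.image F) fun k => ⟨x k, hxB k, rfl⟩)]
  simp only [← mul_sub, ← map_sub]
  exact (tsum_of_norm_bounded hβs.hasSum hterm).trans hβε

end NuclearRep

/-- If a Hausdorff locally convex space `E` possesses the approximation
property, then every nuclear operator on `E` possesses a well-defined trace: any two
nuclear representations of the same operator yield the same value
`∑_{i=1}^∞ λ_i ⟨x'_i, x_i⟩`. -/
theorem statement11 (hap : HasAP 𝕜 E) :
    ∀ (A : E → E) (l : ℕ → 𝕜) (x : ℕ → E) (x' : ℕ → E →L[𝕜] 𝕜)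
      (μ : ℕ → 𝕜) (y : ℕ → E) (y' : ℕ → E →L[𝕜] 𝕜),
      NuclearRep 𝕜 A l x x' → NuclearRep 𝕜 A μ y y' →
      ∑' i, l i * x' i (x i) = ∑' j, μ j * y' j (y j) := by
  intro A l x x' μ y y' hx hy
  refine eq_of_forall_dist_le fun ε hε => ?_
  obtain ⟨S, hS, W, hW, hxF⟩ := hx.exists_forall_dist_tsum_mul_apply_comp_le (half_pos hε)
  obtain ⟨S', hS', W', hW', hyF⟩ := hy.exists_forall_dist_tsum_mul_apply_comp_le (half_pos hε)
  obtain ⟨F, hF, hFS⟩ := hap (.id 𝕜 E) (S ∪ S') (hS.union hS') (W ∩ W') (inter_mem hW hW')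
  calc dist (∑' i, l i * x' i (x i)) (∑' j, μ j * y' j (y j))
      ≤ dist (∑' i, l i * x' i (x i)) (∑' k, l k * x' k (F (x k))) +
        dist (∑' j, μ j * y' j (y j)) (∑' k, μ k * y' k (F (y k))) := by
        rw [hx.tsum_mul_apply_comp_eq hy hF]
        exact dist_triangle_right _ _ _
    _ ≤ ε / 2 + ε / 2 :=
      add_le_add (hxF F fun v hv => (hFS v (.inl hv)).1) (hyF F fun v hv => (hFS v (.inr hv)).2)
    _ = ε := add_halves ε
end

section
/- If the identity operator on E is the limit in the weak operator topology of a countable sequence {I_n} of finite-rank operators, then every Fredholm operator F on E possesses a well-defined trace, and tr F = lim_{n→∞} sp(F∘I_n), where sp denotes the ordinary trace of a finite-rank operator. -/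
/-
Setting: `E` is a Hausdorff locally convex topological vector space over `𝕜 = ℝ` or `ℂ`
(`RCLike 𝕜`), with `E' = E →L[𝕜] 𝕜` its (strong) dual.
-/

open Filter Topology Bornology

/-!
For a finite-rank `A`, the operator `F ∘ A` factors through the finite-dimensional range `W`
of `A`, so `sp (F ∘ A)` is a trace on `W`; there the partial sums of the Fredholm series converge
pointwise, hence in trace, which gives `sp (F ∘ A) = ∑ λᵢ ⟨x'ᵢ, A xᵢ⟩`. For `A = Iₙ` the terms
are dominated by `C |λᵢ|`, where `C` bounds `|⟨x', Iₙ x⟩|` uniformly over `x ∈ B`, `x' ∈ B'`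
and `n`: this is Banach–Steinhaus, applied first in the Banach space `E'_{B'}` and then in `E_B`.
Dominated convergence gives `sp (F ∘ Iₙ) → ∑ λᵢ ⟨x'ᵢ, xᵢ⟩`, and since the left-hand side only
depends on `F`, so does the trace.
-/

open Set Pointwise

section BanachDisk

variable {𝕜 : Type} [RCLike 𝕜] {V : Type} [AddCommGroup V] [Module 𝕜 V] [Module ℝ V]
  [IsScalarTower ℝ 𝕜 V] {B : Set V}

theorem Balanced.exists_pos_mem_smul_of_mem_span (hbal : Balanced 𝕜 B) (hconv : Convex ℝ B)
    (h0 : (0 : V) ∈ B) {v : V} (hv : v ∈ Submodule.span 𝕜 B) : ∃ r > (0 : ℝ), v ∈ r • B := by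
  induction hv using Submodule.span_induction with
  | mem w hw => exact ⟨1, one_pos, by rwa [one_smul]⟩
  | zero => exact ⟨1, one_pos, zero_mem_smul_set h0⟩
  | add x y _ _ hx hy =>
    obtain ⟨r, hr, hxr⟩ := hx
    obtain ⟨s, hs, hys⟩ := hy
    exact ⟨r + s, add_pos hr hs, hconv.add_smul hr.le hs.le ▸ add_mem_add hxr hys⟩
  | smul c x _ hx =>
    obtain ⟨r, hr, b, hb, rfl⟩ := hx
    have ha : (0 : ℝ) < ‖c‖ + 1 := by positivity
    have hcb : ((‖c‖ + 1)⁻¹ • c) • b ∈ B := hbal.smul_mem (by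
      rw [norm_smul, Real.norm_of_nonneg (inv_nonneg.2 ha.le), inv_mul_le_iff₀ ha]
      linarith) hb
    refine ⟨r * (‖c‖ + 1), mul_pos hr ha, _, hcb, ?_⟩
    show (r * (‖c‖ + 1)) • ((‖c‖ + 1)⁻¹ • c) • b = c • r • b
    rw [mul_smul, ← smul_assoc (‖c‖ + 1), smul_inv_smul₀ ha.ne', smul_comm]

theorem Balanced.absorbent_preimage_coe_span (hbal : Balanced 𝕜 B) (hconv : Convex ℝ B)
    (h0 : (0 : V) ∈ B) : Absorbent ℝ ((↑) ⁻¹' B : Set (Submodule.span 𝕜 B)) := by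
  refine absorbent_iff_inv_smul.2 fun v => ?_
  obtain ⟨r, hr, b, hb, hv⟩ := hbal.exists_pos_mem_smul_of_mem_span hconv h0 v.2
  filter_upwards [(tendsto_norm_cobounded_atTop (E := ℝ)).eventually_ge_atTop r] with c hc
  show c⁻¹ • (v : V) ∈ B
  rw [← hv, smul_smul, RCLike.real_smul_eq_coe_smul (K := 𝕜)]
  refine hbal.smul_mem ?_ hb
  rw [Real.norm_eq_abs] at hc
  rw [RCLike.norm_ofReal, abs_mul, abs_inv, abs_of_pos hr, inv_mul_le_iff₀ (hr.trans_le hc)]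
  simpa using hc

theorem gauge_preimage_coe (S : Submodule 𝕜 V) (v : S) :
    gauge ((↑) ⁻¹' B : Set S) v = gauge B v := by
  simp only [gauge_def', mem_preimage, Submodule.coe_smul_of_tower]

theorem norm_le_mul_gauge {W : Type} [AddCommGroup W] [Module 𝕜 W] [Module ℝ W]
    [IsScalarTower ℝ 𝕜 W] {s : Set W} (hs : Absorbent ℝ s) (f : W →ₗ[𝕜] 𝕜) {M : ℝ}
    (hf : ∀ w ∈ s, ‖f w‖ ≤ M) (v : W) : ‖f v‖ ≤ M * gauge s v := by
  have hM : 0 ≤ M := by simpa using hf 0 hs.zero_mem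
  refine ge_of_tendsto (x := 𝓝[>] gauge s v)
    ((continuous_const_mul M).tendsto _ |>.mono_left nhdsWithin_le_nhds)
    (eventually_nhdsWithin_of_forall fun a ha => ?_)
  obtain ⟨b, hb, hba, w, hw, rfl⟩ := exists_lt_of_gauge_lt hs ha
  calc ‖f (b • w)‖ = b * ‖f w‖ := by
        rw [LinearMap.map_smul_of_tower, norm_smul, Real.norm_of_nonneg hb.le]
    _ ≤ M * a := by nlinarith [hf w hw, norm_nonneg (f w)]

theorem Balanced.exists_uniform_bound (hbal : Balanced 𝕜 B) (hconv : Convex ℝ B)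
    (hcomplete : ∀ u : ℕ → V, (∀ n, u n ∈ Submodule.span 𝕜 B) →
      (∀ ε : ℝ, 0 < ε → ∃ N : ℕ, ∀ m ≥ N, ∀ n ≥ N, gauge B (u m - u n) < ε) →
      ∃ v ∈ Submodule.span 𝕜 B, ∀ ε : ℝ, 0 < ε → ∃ N : ℕ, ∀ n ≥ N, gauge B (v - u n) < ε)
    {ι : Type} (T : ι → V →ₗ[𝕜] 𝕜) (hTB : ∀ i, ∃ M, ∀ w ∈ B, ‖T i w‖ ≤ M)
    (hT : ∀ v ∈ Submodule.span 𝕜 B, ∃ C, ∀ i, ‖T i v‖ ≤ C) :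
    ∃ C, ∀ i, ∀ w ∈ B, ‖T i w‖ ≤ C := by
  rcases B.eq_empty_or_nonempty with rfl | hne
  · exact ⟨0, fun _ _ => False.elim⟩
  -- `S` with the norm `gauge B` is the Banach space `E_B`
  set S := Submodule.span 𝕜 B
  have habs := hbal.absorbent_preimage_coe_span hconv (hbal.zero_mem hne)
  let p : Seminorm 𝕜 S := gaugeSeminorm (hbal.mulActionHom_preimage S.subtype.toMulActionHom)
    (hconv.linear_preimage (S.subtype.restrictScalars ℝ)) habs
  let := p.toAddGroupSeminorm.toSeminormedAddCommGroup
  let : NormedSpace 𝕜 S := ⟨fun c v => (map_smul_eq_mul p c v).le⟩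
  have hnorm : ∀ v : S, ‖v‖ = gauge B v := gauge_preimage_coe S
  have : CompleteSpace S := by
    refine Metric.complete_of_cauchySeq_tendsto fun u hu => ?_
    obtain ⟨v, hvS, hv⟩ := hcomplete (fun n => u n) (fun n => (u n).2) fun ε hε => by
      simpa [dist_eq_norm, hnorm] using Metric.cauchySeq_iff.1 hu ε hε
    refine ⟨⟨v, hvS⟩, Metric.tendsto_atTop.2 fun ε hε => ?_⟩
    simpa [dist_comm (u _), dist_eq_norm, hnorm] using hv ε hε
  choose M hM using hTB
  let T' : ι → S →L[𝕜] 𝕜 := fun i => (T i ∘ₗ S.subtype).mkContinuous (M i)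
    (norm_le_mul_gauge habs _ fun w hw => hM i w hw)
  obtain ⟨C, hC⟩ := banach_steinhaus (g := T') fun v => hT v v.2
  refine ⟨C, fun i w hw => ?_⟩
  calc ‖T i w‖ = ‖T' i ⟨w, Submodule.subset_span hw⟩‖ := rfl
    _ ≤ ‖T' i‖ * 1 := (T' i).le_opNorm_of_le (by rw [hnorm]; exact gauge_le_one_of_mem hw)
    _ ≤ C := by simpa using hC i

theorem IsBanachDisk.exists_bound [TopologicalSpace V] (hB : IsBanachDisk 𝕜 B) {ι : Type}
    (T : ι → V →L[𝕜] 𝕜) (hT : ∀ v ∈ Submodule.span 𝕜 B, ∃ C, ∀ i, ‖T i v‖ ≤ C) :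
    ∃ C, ∀ i, ∀ w ∈ B, ‖T i w‖ ≤ C :=
  hB.1.exists_uniform_bound hB.2.1 hB.2.2.2 (fun i => T i)
    (fun i => (NormedSpace.image_isVonNBounded_iff 𝕜).1 (hB.2.2.1.image (T i))) hT

end BanachDisk

theorem LinearMap.trace_restrict_eq_of_le {K M : Type} [Field K] [AddCommGroup M] [Module K M]
    (A : M →ₗ[K] M) {U U' : Submodule K M} [FiniteDimensional K U] [FiniteDimensional K U']
    (hle : U ≤ U') (hA : ∀ v, A v ∈ U) :
    trace K U (A.restrict fun v _ => hA v) = trace K U' (A.restrict fun v _ => hle (hA v)) := by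
  have h₁ : A.restrict (fun v _ => hA v) =
      (A ∘ₗ U'.subtype).codRestrict U (fun v => hA _) ∘ₗ Submodule.inclusion hle := by
    ext; rfl
  have h₂ : A.restrict (fun v _ => hle (hA v)) =
      Submodule.inclusion hle ∘ₗ (A ∘ₗ U'.subtype).codRestrict U (fun v => hA _) := by
    ext; rfl
  rw [h₁, h₂, trace_comp_comm']

theorem LinearMap.tendsto_trace_of_tendsto {K W : Type} [NontriviallyNormedField K]
    [CompleteSpace K] [AddCommGroup W] [Module K W] [TopologicalSpace W]
    [IsTopologicalAddGroup W] [ContinuousSMul K W] [T2Space W] [FiniteDimensional K W]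
    {α : Type} {L : Filter α} {T : α → W →ₗ[K] W} {T₀ : W →ₗ[K] W}
    (h : ∀ w, Tendsto (fun a => T a w) L (𝓝 (T₀ w))) :
    Tendsto (fun a => trace K W (T a)) L (𝓝 (trace K W T₀)) := by
  let b := Module.finBasis K W
  simp only [trace_eq_matrix_trace K b, Matrix.trace, Matrix.diag, toMatrix_apply,
    ← b.coord_apply]
  exact tendsto_finsetSum _ fun k _ =>
    ((b.coord k).continuous_of_finiteDimensional.tendsto _).comp (h (b k))

section Fredholm

variable {𝕜 : Type} [RCLike 𝕜] {E : Type} [AddCommGroup E] [Module 𝕜 E] [TopologicalSpace E]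

theorem sp_eq_trace_comp {W : Type} [AddCommGroup W] [Module 𝕜 W] [FiniteDimensional 𝕜 W]
    (T : E →L[𝕜] E) (f : W →ₗ[𝕜] E) (g : E →ₗ[𝕜] W) (hT : ∀ v, T v = f (g v)) :
    sp 𝕜 T = LinearMap.trace 𝕜 W (g ∘ₗ f) := by
  have hle : LinearMap.range (T : E →ₗ[𝕜] E) ≤ LinearMap.range f := by
    rintro _ ⟨v, rfl⟩
    exact ⟨g v, (hT v).symm⟩
  have := Submodule.finiteDimensional_of_le hle
  have hsplit : (T : E →ₗ[𝕜] E).restrict (fun v _ => hle (LinearMap.mem_range_self _ v)) =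
      f.rangeRestrict ∘ₗ (g ∘ₗ (LinearMap.range f).subtype) := by
    ext u
    exact hT u
  rw [sp, LinearMap.trace_restrict_eq_of_le _ hle (LinearMap.mem_range_self _), hsplit,
    LinearMap.trace_comp_comm']
  rfl

variable {l : ℕ → 𝕜} {x : ℕ → E} {x' : ℕ → E →L[𝕜] 𝕜}

def fredholmPartialSum (l : ℕ → 𝕜) (x : ℕ → E) (x' : ℕ → E →L[𝕜] 𝕜) (N : ℕ) : E →ₗ[𝕜] E :=
  ∑ i ∈ Finset.range N, (l i • (x' i : E →ₗ[𝕜] 𝕜)).smulRight (x i)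

theorem fredholmPartialSum_apply (N : ℕ) (v : E) :
    fredholmPartialSum l x x' N v = ∑ i ∈ Finset.range N, (l i * x' i v) • x i := by
  simp [fredholmPartialSum]

theorem IsBanachDisk.exists_bound_of_weakly_bounded [Module ℝ E] [IsScalarTower ℝ 𝕜 E]
    [ContinuousSMul 𝕜 E] {B : Set E} (hB : IsBanachDisk 𝕜 B) {B' : Set (E →L[𝕜] 𝕜)}
    (hB' : IsBanachDisk 𝕜 B') {ι : Type} (T : ι → E →L[𝕜] E)
    (hT : ∀ v (f : E →L[𝕜] 𝕜), ∃ C, ∀ i, ‖f (T i v)‖ ≤ C) :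
    ∃ C, ∀ i, ∀ f ∈ B', ∀ w ∈ B, ‖f (T i w)‖ ≤ C := by
  let ev (v : E) : (E →L[𝕜] 𝕜) →L[𝕜] 𝕜 := (PointwiseConvergenceCLM.evalCLM _ 𝕜 v).comp
    (ContinuousLinearMap.toPointwiseConvergenceCLM 𝕜 _ E 𝕜)
  choose C hC using fun v => hB'.exists_bound (fun i => ev (T i v)) fun f _ => hT v f
  obtain ⟨C', hC'⟩ := hB.exists_bound (fun p : ι × B' => p.2.1.comp (T p.1))
    fun v _ => ⟨C v, fun p => hC v p.1 p.2 p.2.2⟩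
  exact ⟨C', fun i f hf => hC' (i, ⟨f, hf⟩)⟩

variable [IsTopologicalAddGroup E] [Module ℝ E] {F : E → E}

theorem FredholmRep.tendsto_partialSum (hF : FredholmRep 𝕜 F l x x') (v : E) :
    Tendsto (fun N => fredholmPartialSum l x x' N v) atTop (𝓝 (F v)) := by
  simpa only [fredholmPartialSum_apply] using hF.2 v

variable [ContinuousSMul 𝕜 E] [T2Space E]

def FredholmRep.toLinearMap (hF : FredholmRep 𝕜 F l x x') : E →ₗ[𝕜] E :=
  linearMapOfTendsto F (fredholmPartialSum l x x') (tendsto_pi_nhds.2 hF.tendsto_partialSum)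

theorem FredholmRep.exists_comp (hF : FredholmRep 𝕜 F l x x') {A : E →L[𝕜] E}
    (hA : IsFiniteRank 𝕜 A) : ∃ G : E →L[𝕜] E, ∀ v, G v = F (A v) := by
  have : FiniteDimensional 𝕜 (LinearMap.range (A : E →ₗ[𝕜] E)) := hA
  exact ⟨(hF.toLinearMap ∘ₗ (LinearMap.range (A : E →ₗ[𝕜] E)).subtype).toContinuousLinearMap.comp
    (A.codRestrict _ (LinearMap.mem_range_self (A : E →ₗ[𝕜] E))), fun _ => rfl⟩

theorem FredholmRep.tendsto_sp_comp (hF : FredholmRep 𝕜 F l x x') {A : E →L[𝕜] E}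
    (hA : IsFiniteRank 𝕜 A) {G : E →L[𝕜] E} (hG : ∀ v, G v = F (A v)) :
    Tendsto (fun N => ∑ i ∈ Finset.range N, l i * x' i (A (x i))) atTop (𝓝 (sp 𝕜 G)) := by
  set W := LinearMap.range (A : E →ₗ[𝕜] E)
  have : FiniteDimensional 𝕜 W := hA
  let g : E →L[𝕜] W := A.codRestrict W (LinearMap.mem_range_self (A : E →ₗ[𝕜] E))
  have htrace : ∀ N, LinearMap.trace 𝕜 W (g ∘ₗ fredholmPartialSum l x x' N ∘ₗ W.subtype) =
      ∑ i ∈ Finset.range N, l i * x' i (A (x i)) := by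
    intro N
    have hrankOne : g ∘ₗ fredholmPartialSum l x x' N ∘ₗ W.subtype = ∑ i ∈ Finset.range N,
        ((l i • (x' i : E →ₗ[𝕜] 𝕜)) ∘ₗ W.subtype).smulRight (g (x i)) := by
      ext w
      simp [fredholmPartialSum_apply]
    rw [hrankOne, map_sum]
    simp [g]
  rw [sp_eq_trace_comp G (hF.toLinearMap ∘ₗ W.subtype) g hG]
  simp_rw [← htrace]
  exact LinearMap.tendsto_trace_of_tendsto fun w =>
    (g.continuous.tendsto _).comp (hF.tendsto_partialSum w)

theorem FredholmRep.tendsto_sp_comp_of_tendsto [IsScalarTower ℝ 𝕜 E]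
    (hF : FredholmRep 𝕜 F l x x') {I : ℕ → E →L[𝕜] E} (hfr : ∀ n, IsFiniteRank 𝕜 (I n))
    (hconv : ∀ (v : E) (f : E →L[𝕜] 𝕜), Tendsto (fun n => f (I n v)) atTop (𝓝 (f v)))
    {G : ℕ → E →L[𝕜] E} (hG : ∀ n v, G n v = F (I n v)) :
    Tendsto (fun n => sp 𝕜 (G n)) atTop (𝓝 (∑' i, l i * x' i (x i))) := by
  obtain ⟨hl, ⟨B, hB, hxB⟩, ⟨B', hB', hx'B'⟩⟩ := hF.1
  obtain ⟨C, hC⟩ := hB.exists_bound_of_weakly_bounded hB' I fun v f =>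
    let ⟨c, hc⟩ := (hconv v f).norm.bddAbove_range
    ⟨c, fun n => hc (mem_range_self n)⟩
  have hbound : ∀ n i, ‖l i * x' i (I n (x i))‖ ≤ ‖l i‖ * C := fun n i => by
    rw [norm_mul]
    exact mul_le_mul_of_nonneg_left (hC n _ (hx'B' i) _ (hxB i)) (norm_nonneg _)
  have hsp : ∀ n, sp 𝕜 (G n) = ∑' i, l i * x' i (I n (x i)) := fun n =>
    tendsto_nhds_unique (hF.tendsto_sp_comp (hfr n) (hG n))
      (Summable.of_norm_bounded (hl.mul_right C) (hbound n)).hasSum.tendsto_sum_nat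
  simp_rw [hsp]
  exact tendsto_tsum_of_dominated_convergence (hl.mul_right C)
    (fun i => (hconv (x i) (x' i)).const_mul (l i)) (Eventually.of_forall hbound)

end Fredholm

variable {𝕜 : Type} [RCLike 𝕜] {E : Type} [AddCommGroup E] [Module 𝕜 E]
  [UniformSpace E] [IsUniformAddGroup E] [ContinuousSMul 𝕜 E]
  [Module ℝ E] [IsScalarTower ℝ 𝕜 E] [LocallyConvexSpace ℝ E] [T2Space E]

/-- If the identity operator on `E` is the limit in the weak operator
topology of a countable sequence `{I_n}` of finite-rank operators, then every Fredholm
operator `F` on `E` possesses a well-defined trace (any two Fredholm representations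
yield the same trace), and `tr F = lim_{n→∞} sp (F ∘ I_n)`, where `sp` is the ordinary
trace of a finite-rank operator. -/
theorem statement16
    (I : ℕ → E →L[𝕜] E) (hfr : ∀ n, IsFiniteRank 𝕜 (I n))
    (hconv : ∀ (x : E) (f : E →L[𝕜] 𝕜),
      Filter.Tendsto (fun n => f (I n x)) Filter.atTop (𝓝 (f x))) :
    (∀ (F : E → E) (l : ℕ → 𝕜) (x : ℕ → E) (x' : ℕ → E →L[𝕜] 𝕜)
        (μ : ℕ → 𝕜) (y : ℕ → E) (y' : ℕ → E →L[𝕜] 𝕜),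
      FredholmRep 𝕜 F l x x' → FredholmRep 𝕜 F μ y y' →
      ∑' i, l i * x' i (x i) = ∑' j, μ j * y' j (y j)) ∧
    (∀ (F : E → E) (l : ℕ → 𝕜) (x : ℕ → E) (x' : ℕ → E →L[𝕜] 𝕜),
      FredholmRep 𝕜 F l x x' →
      ∀ G : ℕ → E →L[𝕜] E, (∀ (n : ℕ) (v : E), G n v = F (I n v)) →
        Filter.Tendsto (fun n => sp 𝕜 (G n)) Filter.atTop
          (𝓝 (∑' i, l i * x' i (x i)))) := by
  refine ⟨fun F l x x' μ y y' hF hF' => ?_,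
    fun F l x x' hF G hG => hF.tendsto_sp_comp_of_tendsto hfr hconv hG⟩
  choose G hG using fun n => hF.exists_comp (hfr n)
  exact tendsto_nhds_unique (hF.tendsto_sp_comp_of_tendsto hfr hconv hG)
    (hF'.tendsto_sp_comp_of_tendsto hfr hconv hG)
end
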